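/- arXiv:alg-geom/9511019 — 2 statements merged into one kernel-verified Lean document; each statement's English description precedes it below -/
import Mathlib

section
/- Let R be a commutative ring, I and J ideals of R with I ⊆ J, such that J = (f, g) and I = (f, gh) for elements f, g, h ∈ R. Then the ideal (f, h) satisfies: J/I is generated by the image of g, and R/(f,h) is isomorphic to J/I as R-modules via multiplication by g, provided g is a nonzerodivisor modulo (f) and modulo (f,h) appropriately; in particular if I, J are as above then J/I ≅ R/(f,h) · g. -/
/-- if `J = (f, g)` and `I = (f, g*h)` (so `I ⊆ J`), then `J/I` is
generated by the image of `g`, and — provided `g` is a nonzerodivisor modulo `(f)` —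
multiplication by `g` induces an isomorphism `R/(f,h) ≅ J/I`: the map
`r ↦ r·g mod I` has range exactly `J/I` and kernel exactly `(f, h)`. -/
theorem stmt7 (R : Type*) [CommRing R] (f g h : R)
    (hreg : ∀ r : R, r * g ∈ Ideal.span {f} → r ∈ Ideal.span {f}) :
    Ideal.span {f, g * h} ≤ Ideal.span {f, g} ∧
    LinearMap.range
        ((Ideal.span {f, g * h} : Submodule R R).mkQ.comp
          (LinearMap.toSpanSingleton R R g)) =
      Submodule.map (Ideal.span {f, g * h} : Submodule R R).mkQ
        (Ideal.span {f, g} : Submodule R R) ∧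
    LinearMap.ker
        ((Ideal.span {f, g * h} : Submodule R R).mkQ.comp
          (LinearMap.toSpanSingleton R R g)) =
      (Ideal.span {f, h} : Submodule R R) := by
  refine ⟨?_, ?_, ?_⟩
  · rw [Ideal.span_le]
    rintro x (rfl | rfl)
    · exact Ideal.subset_span (Or.inl rfl)
    · exact Ideal.mul_mem_right h _ (Ideal.subset_span (Or.inr rfl))
  · ext x
    simp only [LinearMap.mem_range, LinearMap.comp_apply, Submodule.mkQ_apply,
      LinearMap.toSpanSingleton_apply, Submodule.mem_map]
    constructor
    · rintro ⟨r, rfl⟩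
      exact ⟨r • g, Ideal.mul_mem_left _ r (Ideal.subset_span (Or.inr rfl)), rfl⟩
    · rintro ⟨y, hy, rfl⟩
      rw [Ideal.mem_span_pair] at hy
      obtain ⟨a, b, rfl⟩ := hy
      refine ⟨b, ?_⟩
      rw [Submodule.Quotient.eq]
      have : b • g - (a * f + b * g) = (-a) * f + 0 * (g * h) := by rw [smul_eq_mul]; ring
      rw [this]
      exact Ideal.mem_span_pair.mpr ⟨-a, 0, rfl⟩
  · ext r
    simp only [LinearMap.mem_ker, LinearMap.comp_apply, Submodule.mkQ_apply,
      LinearMap.toSpanSingleton_apply, Submodule.Quotient.mk_eq_zero, smul_eq_mul,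
      SetLike.mem_coe]
    constructor
    · intro hr
      rw [Ideal.mem_span_pair] at hr
      obtain ⟨a, b, hab⟩ := hr
      have : (r - b * h) * g ∈ Ideal.span {f} := by
        refine Ideal.mem_span_singleton.mpr ⟨a, ?_⟩
        linear_combination -hab
      obtain ⟨c, hc⟩ := Ideal.mem_span_singleton.mp (hreg _ this)
      exact Ideal.mem_span_pair.mpr ⟨c, b, by linear_combination -hc⟩
    · intro hr
      rw [Ideal.mem_span_pair] at hr
      obtain ⟨a, b, rfl⟩ := hr
      exact Ideal.mem_span_pair.mpr ⟨a * g, b, by ring⟩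
end

section
/- Let k[[x,y]] be a power series ring over a field, u, v units, and k, l, p positive integers. Then dim_k k[[x,y]]/(x^{pk}, y^{pl}, u x^k + v y^l) = pkl. -/
/-!
As `u` is a unit, the ideal is `(x^k + w y^l, y^(pl))` with `w = u⁻¹ v`: modulo
`x^k + w y^l`, `x^(pk) ≡ (-w y^l)^p` is a multiple of `y^(pl)`. Modulo this ideal the monomials `x^i y^j` with
`i < k`, `j < pl` form a basis, over any commutative ring. They span: splitting off the terms of
`x`-degree `≥ k` and replacing `x^k` by `-w y^l` raises the `y`-adic order by `l`, and `y^(pl)` is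
zero. They are independent: if `A (x^k + w y^l) + B y^(pl)` has `x`-degree `< k`, comparing the
coefficients of `x^k y^j`, `j < pl`, shows inductively that `y^(ml)` divides `A` for `m ≤ p`;
so the combination is divisible by `y^(pl)`, and if its `y`-degree is `< pl` it vanishes.
-/

open MvPowerSeries Finsupp

namespace TwoVarColength

variable {R : Type*} [CommRing R]

section Ideal

variable (x y w : R) (k l p : ℕ)

theorem pow_mul_mem_span_add_mul_pow :
    x ^ (p * k) ∈ Ideal.span {x ^ k + w * y ^ l, y ^ (p * l)} := by
  obtain ⟨c, hc⟩ := sub_dvd_pow_sub_pow (x ^ k) (-(w * y ^ l)) p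
  refine Ideal.mem_span_pair.mpr ⟨c, (-w) ^ p, ?_⟩
  rw [mul_comm p k, mul_comm p l, pow_mul, pow_mul]
  linear_combination -hc

theorem span_pow_pow_unit_mul_add (u : Rˣ) (v : R) :
    Ideal.span {x ^ (p * k), y ^ (p * l), u * x ^ k + v * y ^ l} =
      Ideal.span {x ^ k + (u⁻¹ * v) * y ^ l, y ^ (p * l)} := by
  have hassoc : (u : R) * x ^ k + v * y ^ l = u * (x ^ k + (u⁻¹ * v) * y ^ l) := by
    linear_combination (-(v * y ^ l)) * u.mul_inv
  rw [hassoc, Ideal.span_insert, Ideal.span_insert, Ideal.span_singleton_mul_left_unit u.isUnit,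
    ← Ideal.span_insert, ← Ideal.span_insert, Set.pair_comm (y ^ (p * l))]
  exact Submodule.span_insert_eq_span (pow_mul_mem_span_add_mul_pow x y _ k l p)

end Ideal

noncomputable def exponentBox (a b : ℕ) : Finset (Fin 2 →₀ ℕ) :=
  (Finset.range a ×ˢ Finset.range b).image fun ij => single 0 ij.1 + single 1 ij.2

theorem mem_exponentBox {a b : ℕ} {d : Fin 2 →₀ ℕ} :
    d ∈ exponentBox a b ↔ d 0 < a ∧ d 1 < b := by
  simp only [exponentBox, Finset.mem_image, Finset.mem_product, Finset.mem_range, Prod.exists]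
  constructor
  · rintro ⟨i, j, ⟨hi, hj⟩, rfl⟩
    simpa using ⟨hi, hj⟩
  · rintro ⟨h0, h1⟩
    refine ⟨d 0, d 1, ⟨h0, h1⟩, ?_⟩
    ext s
    fin_cases s <;> simp

theorem card_exponentBox (a b : ℕ) : (exponentBox a b).card = a * b := by
  rw [exponentBox, Finset.card_image_of_injective, Finset.card_product, Finset.card_range,
    Finset.card_range]
  rintro ⟨i, j⟩ ⟨i', j'⟩ h
  simp only [Prod.mk.injEq]
  exact ⟨by simpa using DFunLike.congr_fun h 0, by simpa using DFunLike.congr_fun h 1⟩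

theorem coeff_sum_monomial {σ : Type*} [DecidableEq σ] (s : Finset (σ →₀ ℕ)) (c : (σ →₀ ℕ) → R)
    (d : σ →₀ ℕ) : coeff d (∑ e ∈ s, monomial e (c e)) = if d ∈ s then c d else 0 := by
  simp only [map_sum, coeff_monomial, Finset.sum_ite_eq]

theorem exists_eq_sum_monomial_add (f : MvPowerSeries (Fin 2) R) (a b : ℕ) :
    ∃ h₁ h₂, f = ∑ e ∈ exponentBox a b, monomial e (coeff e f) + X 0 ^ a * h₁ + X 1 ^ b * h₂ := by
  let g₁ : MvPowerSeries (Fin 2) R := fun d => if a ≤ d 0 then coeff d f else 0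
  let g₂ : MvPowerSeries (Fin 2) R := fun d => if d 0 < a ∧ b ≤ d 1 then coeff d f else 0
  obtain ⟨h₁, hg₁⟩ : X 0 ^ a ∣ g₁ :=
    X_pow_dvd_iff.mpr fun d hd => if_neg (Nat.not_le.mpr hd)
  obtain ⟨h₂, hg₂⟩ : X 1 ^ b ∣ g₂ :=
    X_pow_dvd_iff.mpr fun d hd => if_neg fun h => Nat.not_le.mpr hd h.2
  refine ⟨h₁, h₂, ?_⟩
  rw [← hg₁, ← hg₂]
  ext d
  have hc₁ : coeff d g₁ = if a ≤ d 0 then coeff d f else 0 := rfl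
  have hc₂ : coeff d g₂ = if d 0 < a ∧ b ≤ d 1 then coeff d f else 0 := rfl
  simp only [map_add, hc₁, hc₂, coeff_sum_monomial, mem_exponentBox]
  split_ifs <;> first | ring1 | (exfalso; omega)

section Independence

variable {k l : ℕ} (w : MvPowerSeries (Fin 2) R)

theorem X_pow_add_dvd_of_coeff_mul_eq_zero {A : MvPowerSeries (Fin 2) R} {m : ℕ}
    (hA : X 1 ^ m ∣ A)
    (h : ∀ d, k ≤ d 0 → d 1 < m + l → coeff d (A * (X 0 ^ k + w * X 1 ^ l)) = 0) :
    X 1 ^ (m + l) ∣ A := by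
  obtain ⟨A₁, rfl⟩ := hA
  rw [pow_add]
  refine mul_dvd_mul_left _ (X_pow_dvd_iff.mpr fun d hd => ?_)
  -- the coefficient of `A₁` at `d` is that of the product at `d + (k, m)`
  have hexpand : X 1 ^ m * A₁ * (X 0 ^ k + w * X 1 ^ l) =
      monomial (single 0 k + single 1 m) 1 * A₁ + X 1 ^ (m + l) * (w * A₁) := by
    rw [← one_mul (1 : R), ← monomial_mul_monomial, ← X_pow_eq, ← X_pow_eq, pow_add]
    ring
  have hvanish : coeff (single 0 k + single 1 m + d) (X 1 ^ (m + l) * (w * A₁)) = 0 :=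
    X_pow_dvd_iff.mp (dvd_mul_right _ _) _ (by simpa using hd)
  have hcoeff := h (single 0 k + single 1 m + d) (by simp) (by simpa using hd)
  rwa [hexpand, map_add, coeff_add_monomial_mul, one_mul, hvanish, add_zero] at hcoeff

theorem X_pow_mul_dvd_of_coeff_mul_eq_zero {A : MvPowerSeries (Fin 2) R} {p : ℕ}
    (h : ∀ d, k ≤ d 0 → d 1 < p * l → coeff d (A * (X 0 ^ k + w * X 1 ^ l)) = 0) :
    X 1 ^ (p * l) ∣ A := by
  suffices ∀ m ≤ p, X 1 ^ (m * l) ∣ A from this p le_rfl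
  intro m
  induction m with
  | zero => simp
  | succ m ih =>
    intro hm
    rw [add_one_mul]
    refine X_pow_add_dvd_of_coeff_mul_eq_zero w (ih (by omega)) fun d hk hl => h d hk ?_
    nlinarith

theorem eq_zero_of_mem_span_of_coeff_eq_zero {p : ℕ} {P : MvPowerSeries (Fin 2) R}
    (hP : P ∈ Ideal.span {X 0 ^ k + w * X 1 ^ l, X 1 ^ (p * l)})
    (hx : ∀ d, k ≤ d 0 → coeff d P = 0) (hy : ∀ d, p * l ≤ d 1 → coeff d P = 0) :
    P = 0 := by
  obtain ⟨A, B, rfl⟩ := Ideal.mem_span_pair.mp hP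
  have hA : X 1 ^ (p * l) ∣ A := by
    refine X_pow_mul_dvd_of_coeff_mul_eq_zero (k := k) w fun d hk hl => ?_
    have hB : coeff d (B * X 1 ^ (p * l)) = 0 :=
      X_pow_dvd_iff.mp (dvd_mul_left _ _) d hl
    have hcoeff := hx d hk
    rwa [map_add, hB, add_zero] at hcoeff
  have hdvd : X 1 ^ (p * l) ∣ A * (X 0 ^ k + w * X 1 ^ l) + B * X 1 ^ (p * l) :=
    dvd_add (dvd_mul_of_dvd_left hA _) (dvd_mul_left _ _)
  ext d
  rw [map_zero]
  rcases lt_or_ge (d 1) (p * l) with hd | hd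
  · exact X_pow_dvd_iff.mp hdvd d hd
  · exact hy d hd

end Independence

section Basis

variable (w : MvPowerSeries (Fin 2) R) (k l p : ℕ)

theorem linearIndepOn_mk_monomial :
    LinearIndepOn R
      (fun e => Ideal.Quotient.mkₐ R (Ideal.span {X 0 ^ k + w * X 1 ^ l, X 1 ^ (p * l)})
        (monomial e 1))
      (exponentBox k (p * l) : Set (Fin 2 →₀ ℕ)) := by
  rw [linearIndepOn_finset_iff]
  intro c hc e he
  have hsum : ∑ e ∈ exponentBox k (p * l), c e • monomial e (1 : R) =
      ∑ e ∈ exponentBox k (p * l), monomial e (c e) := by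
    simp only [← map_smul, smul_eq_mul, mul_one]
  have hmem : ∑ e ∈ exponentBox k (p * l), monomial e (c e) ∈
      Ideal.span {X 0 ^ k + w * X 1 ^ l, X 1 ^ (p * l)} := by
    rw [← hsum, ← Ideal.Quotient.eq_zero_iff_mem, ← Ideal.Quotient.mkₐ_eq_mk R, map_sum]
    simpa only [map_smul] using hc
  have hzero := eq_zero_of_mem_span_of_coeff_eq_zero w hmem
    (fun d hd => by rw [coeff_sum_monomial, if_neg (by rw [mem_exponentBox]; omega)])
    (fun d hd => by rw [coeff_sum_monomial, if_neg (by rw [mem_exponentBox]; omega)])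
  have hcoeff := congr(coeff e $hzero)
  rwa [coeff_sum_monomial, if_pos he, map_zero] at hcoeff

theorem mk_X_pow_mul_mem_span {j : ℕ} (hj : j ≤ p) (f : MvPowerSeries (Fin 2) R) :
    Ideal.Quotient.mkₐ R (Ideal.span {X 0 ^ k + w * X 1 ^ l, X 1 ^ (p * l)})
        (X 1 ^ (j * l) * f) ∈
      Submodule.span R
        ((fun e => Ideal.Quotient.mkₐ R (Ideal.span {X 0 ^ k + w * X 1 ^ l, X 1 ^ (p * l)})
          (monomial e 1)) '' exponentBox k (p * l)) := by
  set J := Ideal.span {X 0 ^ k + w * X 1 ^ l, X 1 ^ (p * l)}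
  induction hj using Nat.decreasingInduction generalizing f with
  | self =>
    rw [Ideal.Quotient.mkₐ_eq_mk, Ideal.Quotient.eq_zero_iff_mem.mpr
      (Ideal.mul_mem_right _ _ (Ideal.subset_span (by simp)))]
    exact Submodule.zero_mem _
  | of_succ j hj ih =>
    obtain ⟨h₁, h₂, hf⟩ := exists_eq_sum_monomial_add f k l
    have hsplit : X 1 ^ (j * l) * f =
        X 1 ^ (j * l) * ∑ e ∈ exponentBox k l, monomial e (coeff e f) +
        (X 0 ^ k + w * X 1 ^ l) * (X 1 ^ (j * l) * h₁) +
        X 1 ^ ((j + 1) * l) * (h₂ - w * h₁) := by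
      conv_lhs => rw [hf]
      rw [add_one_mul, pow_add]
      ring
    have hg : Ideal.Quotient.mkₐ R J (X 0 ^ k + w * X 1 ^ l) = 0 :=
      Ideal.Quotient.eq_zero_iff_mem.mpr (Ideal.subset_span (by simp))
    rw [hsplit, map_add, map_add, map_mul _ (X 0 ^ k + _), hg, zero_mul, add_zero,
      Finset.mul_sum, map_sum]
    refine Submodule.add_mem _ (Submodule.sum_mem _ fun e he => ?_) (ih _)
    rw [mem_exponentBox] at he
    rw [X_pow_eq, monomial_mul_monomial, one_mul, ← mul_one (coeff e f),
      ← smul_eq_mul (coeff e f) 1, map_smul, map_smul]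
    refine Submodule.smul_mem _ _ (Submodule.subset_span ⟨_, ?_, rfl⟩)
    simp only [Finset.mem_coe, mem_exponentBox, coe_add, Pi.add_apply, single_eq_same,
      single_eq_of_ne zero_ne_one, zero_add]
    refine ⟨he.1, ?_⟩
    nlinarith

noncomputable def monomialBasis :
    Module.Basis (exponentBox k (p * l)) R
      (MvPowerSeries (Fin 2) R ⧸ Ideal.span {X 0 ^ k + w * X 1 ^ l, X 1 ^ (p * l)}) :=
  Module.Basis.mk (linearIndepOn_mk_monomial w k l p) <| by
    rintro q -
    obtain ⟨f, rfl⟩ := Ideal.Quotient.mk_surjective q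
    have hf := mk_X_pow_mul_mem_span w k l p (Nat.zero_le p) f
    rwa [zero_mul, pow_zero, one_mul, Set.image_eq_range] at hf

end Basis

end TwoVarColength

open TwoVarColength in
theorem stmt12_general (K : Type*) [Field K] (u v : MvPowerSeries (Fin 2) K)
    (hu : IsUnit u) (k l p : ℕ) :
    Module.finrank K
      (MvPowerSeries (Fin 2) K ⧸
        Ideal.span {(X 0 : MvPowerSeries (Fin 2) K) ^ (p * k), X 1 ^ (p * l),
          u * X 0 ^ k + v * X 1 ^ l}) = p * k * l := by
  rw [← hu.unit_spec, span_pow_pow_unit_mul_add,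
    Module.finrank_eq_card_basis (monomialBasis _ k l p), Fintype.card_coe, card_exponentBox]
  ring

/-- for a power series ring `K[[x,y]]`, units `u, v`, and positive
integers `k, l, p`, one has `dim_K K[[x,y]]/(x^(pk), y^(pl), u x^k + v y^l) = pkl`. -/
theorem stmt12 (K : Type*) [Field K] (u v : MvPowerSeries (Fin 2) K)
    (hu : IsUnit u) (hv : IsUnit v) (k l p : ℕ)
    (hk : 0 < k) (hl : 0 < l) (hp : 0 < p) :
    Module.finrank K
      (MvPowerSeries (Fin 2) K ⧸
        Ideal.span {(X 0 : MvPowerSeries (Fin 2) K) ^ (p * k), X 1 ^ (p * l),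
          u * X 0 ^ k + v * X 1 ^ l}) = p * k * l :=
  stmt12_general K u v hu k l p
end
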